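/- (Lemma A.3) For Adam, under assumptions (S1)-(S3) and (A1)-(A2), for all k ∈ ℕ and all θ ∈ ℝ^d: E[(θ_k − θ)ᵀ m_{k−1}] ≤ D(θ)M^{1/4}/(v_*^{1/4} β_{1k}) · √(σ²/b + G²) + α_k √(β̃_{2k})/(2√(v_*) β_{1k} β̃_{1k}) · (σ²/b + G²) + D(θ) G · β̂_{1k}/β_{1k}. -/

import Mathlib

/-!
Unbiasedness of the stochastic gradient kills the cross term, so
`E‖g_k‖² = E‖g_k - ∇f(θ_k)‖² + E‖∇f(θ_k)‖² ≤ σ²/b + G²`. The momentum `m_{k-1}` is a convex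
combination of `0` and earlier stochastic gradients, so by convexity of `‖·‖²` it obeys the same
second-moment bound, and Cauchy–Schwarz together with `‖θ_k - θ‖ ≤ D(θ)` gives
`E⟨θ_k - θ, m_{k-1}⟩ ≤ D(θ) √(σ²/b + G²)`. This is at most the first term of the bound because
`v_* ≤ v_{0,i} ≤ M` and `β_{1k} < 1`; the other two terms are nonnegative.
-/

open MeasureTheory Filter Real
open scoped InnerProductSpace

theorem measurable_gradient {E : Type*} [NormedAddCommGroup E] [InnerProductSpace ℝ E]
    [CompleteSpace E] [MeasurableSpace E] [BorelSpace E] (f : E → ℝ) :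
    Measurable (gradient f) :=
  (InnerProductSpace.toDual ℝ E).symm.continuous.measurable.comp (measurable_fderiv ℝ f)

namespace MeasureTheory

variable {Ω E : Type*} {mΩ : MeasurableSpace Ω} {μ : Measure Ω}
  [NormedAddCommGroup E] [InnerProductSpace ℝ E]

theorem MemLp.integrable_inner {f g : Ω → E} (hf : MemLp f 2 μ) (hg : MemLp g 2 μ) :
    Integrable (fun ω => ⟪f ω, g ω⟫_ℝ) μ := by
  refine (((memLp_two_iff_integrable_sq_norm hf.1).1 hf).add
    ((memLp_two_iff_integrable_sq_norm hg.1).1 hg)).mono' (hf.1.inner hg.1) ?_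
  refine Eventually.of_forall fun ω => ?_
  rw [Real.norm_eq_abs, Pi.add_apply]
  nlinarith [abs_real_inner_le_norm (f ω) (g ω), sq_nonneg (‖f ω‖ - ‖g ω‖)]

theorem integral_inner_eq_integral_norm_sq_of_condExp_ae_eq [CompleteSpace E]
    {m : MeasurableSpace Ω} (hm : m ≤ mΩ) [SigmaFinite (μ.trim hm)] {g Y : Ω → E}
    (hY : StronglyMeasurable[m] Y) (hYg : Integrable (fun ω => ⟪Y ω, g ω⟫_ℝ) μ)
    (hg : Integrable g μ) (hgY : μ[g | m] =ᵐ[μ] Y) :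
    ∫ ω, ⟪Y ω, g ω⟫_ℝ ∂μ = ∫ ω, ‖Y ω‖ ^ 2 ∂μ := by
  have hpull := condExp_bilin_of_stronglyMeasurable_left (innerSL ℝ) hY hYg hg
  calc ∫ ω, ⟪Y ω, g ω⟫_ℝ ∂μ = ∫ ω, (μ[fun ω => ⟪Y ω, g ω⟫_ℝ | m]) ω ∂μ :=
        (integral_condExp hm).symm
    _ = ∫ ω, ‖Y ω‖ ^ 2 ∂μ := by
        refine integral_congr_ae ?_
        filter_upwards [hpull, hgY] with ω h1 h2
        rw [← real_inner_self_eq_norm_sq]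
        exact h1.trans (by rw [h2]; rfl)

theorem integral_norm_sq_eq_add_of_condExp_ae_eq [CompleteSpace E] [IsFiniteMeasure μ]
    {m : MeasurableSpace Ω} (hm : m ≤ mΩ) {g Y : Ω → E}
    (hY : StronglyMeasurable[m] Y) (hY2 : MemLp Y 2 μ) (hg2 : MemLp g 2 μ)
    (hgY : μ[g | m] =ᵐ[μ] Y) :
    ∫ ω, ‖g ω‖ ^ 2 ∂μ = ∫ ω, ‖g ω - Y ω‖ ^ 2 ∂μ + ∫ ω, ‖Y ω‖ ^ 2 ∂μ := by
  have hYg := hY2.integrable_inner hg2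
  have hcross := integral_inner_eq_integral_norm_sq_of_condExp_ae_eq hm hY hYg
    (hg2.integrable one_le_two) hgY
  have hg2' := (memLp_two_iff_integrable_sq_norm hg2.1).1 hg2
  have hY2' := (memLp_two_iff_integrable_sq_norm hY2.1).1 hY2
  have hexpand : ∀ ω, ‖g ω - Y ω‖ ^ 2 = ‖g ω‖ ^ 2 - 2 * ⟪Y ω, g ω⟫_ℝ + ‖Y ω‖ ^ 2 := fun ω => by
    rw [norm_sub_sq_real, real_inner_comm]
  simp_rw [hexpand]
  have hdiff : Integrable (fun ω => ‖g ω‖ ^ 2 - 2 * ⟪Y ω, g ω⟫_ℝ) μ := hg2'.sub (hYg.const_mul 2)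
  rw [integral_add hdiff hY2', integral_sub hg2' (hYg.const_mul 2),
    integral_const_mul, hcross]
  ring

theorem integral_norm_sq_le_of_condExp_ae_eq [CompleteSpace E] [IsProbabilityMeasure μ]
    {m : MeasurableSpace Ω} (hm : m ≤ mΩ) {g Y : Ω → E} {σ G : ℝ}
    (hY : StronglyMeasurable[m] Y) (hY2 : MemLp Y 2 μ) (hg2 : MemLp g 2 μ)
    (hgY : μ[g | m] =ᵐ[μ] Y) (hvar : ∫ ω, ‖g ω - Y ω‖ ^ 2 ∂μ ≤ σ)
    (hYG : ∀ᵐ ω ∂μ, ‖Y ω‖ ≤ G) :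
    ∫ ω, ‖g ω‖ ^ 2 ∂μ ≤ σ + G ^ 2 := by
  rw [integral_norm_sq_eq_add_of_condExp_ae_eq hm hY hY2 hg2 hgY]
  refine add_le_add hvar ?_
  calc ∫ ω, ‖Y ω‖ ^ 2 ∂μ ≤ ∫ _, G ^ 2 ∂μ :=
        integral_mono_ae ((memLp_two_iff_integrable_sq_norm hY2.1).1 hY2) (integrable_const _)
          (hYG.mono fun ω hω => pow_le_pow_left₀ (norm_nonneg _) hω 2)
    _ = G ^ 2 := by simp

theorem integral_inner_le_mul_sqrt_integral_norm_sq [IsProbabilityMeasure μ] {X Y : Ω → E}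
    {D : ℝ} (hD : 0 ≤ D) (hXm : AEStronglyMeasurable X μ) (hX : ∀ᵐ ω ∂μ, ‖X ω‖ ≤ D)
    (hY : MemLp Y 2 μ) :
    ∫ ω, ⟪X ω, Y ω⟫_ℝ ∂μ ≤ D * √(∫ ω, ‖Y ω‖ ^ 2 ∂μ) := by
  have hYn : MemLp (fun ω => ‖Y ω‖) 2 μ := hY.norm
  have hJensen : (∫ ω, ‖Y ω‖ ∂μ) ^ 2 ≤ ∫ ω, ‖Y ω‖ ^ 2 ∂μ := by
    have hvar := ProbabilityTheory.variance_nonneg (fun ω => ‖Y ω‖) μ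
    rw [ProbabilityTheory.variance_eq_sub hYn, sub_nonneg] at hvar
    simpa only [Pi.pow_apply] using hvar
  calc ∫ ω, ⟪X ω, Y ω⟫_ℝ ∂μ ≤ ∫ ω, D * ‖Y ω‖ ∂μ := by
        refine integral_mono_ae ((MemLp.of_bound hXm D hX).integrable_inner hY)
          ((hYn.integrable one_le_two).const_mul D) ?_
        filter_upwards [hX] with ω hω
        exact (real_inner_le_norm _ _).trans (mul_le_mul_of_nonneg_right hω (norm_nonneg _))
    _ = D * ∫ ω, ‖Y ω‖ ∂μ := integral_const_mul D _
    _ ≤ D * √(∫ ω, ‖Y ω‖ ^ 2 ∂μ) :=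
        mul_le_mul_of_nonneg_left (Real.le_sqrt_of_sq_le hJensen) hD

section MovingAverage

variable {β : ℕ → ℝ} {g u : ℕ → Ω → E}

theorem aestronglyMeasurable_of_movingAverage (hu0 : ∀ ω, u 0 ω = 0)
    (hu : ∀ k ω, u (k + 1) ω = β k • u k ω + (1 - β k) • g k ω)
    (hg : ∀ k, AEStronglyMeasurable (g k) μ) (k : ℕ) : AEStronglyMeasurable (u k) μ := by
  induction k with
  | zero => simpa [funext hu0] using aestronglyMeasurable_const
  | succ k ih =>
    rw [show u (k + 1) = β k • u k + (1 - β k) • g k from funext (hu k)]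
    exact (ih.const_smul _).add ((hg k).const_smul _)

theorem ae_norm_le_of_movingAverage {B : ℝ} (hB : 0 ≤ B) (hβ : ∀ k, β k ∈ Set.Icc 0 1)
    (hu0 : ∀ ω, u 0 ω = 0) (hu : ∀ k ω, u (k + 1) ω = β k • u k ω + (1 - β k) • g k ω)
    (hg : ∀ k, ∀ᵐ ω ∂μ, ‖g k ω‖ ≤ B) (k : ℕ) : ∀ᵐ ω ∂μ, ‖u k ω‖ ≤ B := by
  simp_rw [← mem_closedBall_zero_iff] at hg ⊢
  induction k with
  | zero => exact Eventually.of_forall fun ω => by simpa [hu0] using hB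
  | succ k ih =>
    filter_upwards [ih, hg k] with ω h1 h2
    rw [hu]
    exact convex_closedBall 0 B h1 h2 (hβ k).1 (sub_nonneg.2 (hβ k).2) (by ring)

theorem integral_norm_sq_le_of_movingAverage {S : ℝ} (hS : 0 ≤ S) (hβ : ∀ k, β k ∈ Set.Icc 0 1)
    (hu0 : ∀ ω, u 0 ω = 0) (hu : ∀ k ω, u (k + 1) ω = β k • u k ω + (1 - β k) • g k ω)
    (hg2 : ∀ k, MemLp (g k) 2 μ) (hu2 : ∀ k, MemLp (u k) 2 μ)
    (hgS : ∀ k, ∫ ω, ‖g k ω‖ ^ 2 ∂μ ≤ S) (k : ℕ) : ∫ ω, ‖u k ω‖ ^ 2 ∂μ ≤ S := by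
  have hsq (f : Ω → E) (hf : MemLp f 2 μ) : Integrable (fun ω => ‖f ω‖ ^ 2) μ :=
    (memLp_two_iff_integrable_sq_norm hf.1).1 hf
  induction k with
  | zero => simpa [hu0] using hS
  | succ k ih =>
    have hβ0 := (hβ k).1
    have hβ1 := sub_nonneg.2 (hβ k).2
    calc ∫ ω, ‖u (k + 1) ω‖ ^ 2 ∂μ
        ≤ ∫ ω, (β k * ‖u k ω‖ ^ 2 + (1 - β k) * ‖g k ω‖ ^ 2) ∂μ := by
          refine integral_mono (hsq _ (hu2 _))
            (((hsq _ (hu2 k)).const_mul _).add ((hsq _ (hg2 k)).const_mul _)) fun ω => ?_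
          rw [hu]
          exact (convexOn_univ_norm.pow (fun x _ => norm_nonneg x) 2).2 (Set.mem_univ _)
            (Set.mem_univ _) hβ0 hβ1 (by ring)
      _ = β k * ∫ ω, ‖u k ω‖ ^ 2 ∂μ + (1 - β k) * ∫ ω, ‖g k ω‖ ^ 2 ∂μ := by
          rw [integral_add ((hsq _ (hu2 k)).const_mul _) ((hsq _ (hg2 k)).const_mul _),
            integral_const_mul, integral_const_mul]
      _ ≤ β k * S + (1 - β k) * S := by gcongr; exact hgS k
      _ = S := by ring

end MovingAverage

end MeasureTheory

theorem integral_inner_momentum_le_mul_sqrt {Ω E : Type*} [MeasurableSpace Ω] {μ : Measure Ω}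
    [IsProbabilityMeasure μ] [NormedAddCommGroup E] [InnerProductSpace ℝ E] [CompleteSpace E]
    [MeasurableSpace E] [BorelSpace E] [SecondCountableTopology E]
    {f : E → ℝ} {θ g u : ℕ → Ω → E} {β : ℕ → ℝ} {σ G B R : ℝ}
    (hσ : 0 ≤ σ) (hB : 0 ≤ B) (hβ : ∀ k, β k ∈ Set.Icc 0 1) (hu0 : ∀ ω, u 0 ω = 0)
    (hu : ∀ k ω, u (k + 1) ω = β k • u k ω + (1 - β k) • g k ω)
    (hθ : ∀ k, Measurable (θ k)) (hg : ∀ k, Measurable (g k))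
    (hunbiased : ∀ k, μ[g k | MeasurableSpace.comap (θ k) inferInstance]
        =ᵐ[μ] fun ω => gradient f (θ k ω))
    (hvar : ∀ k, ∫ ω, ‖g k ω - gradient f (θ k ω)‖ ^ 2 ∂μ ≤ σ)
    (hgradG : ∀ k, ∀ᵐ ω ∂μ, ‖gradient f (θ k ω)‖ ≤ G) (hgB : ∀ k, ∀ᵐ ω ∂μ, ‖g k ω‖ ≤ B)
    {k : ℕ} {x : E} (hR : 0 ≤ R) (hθx : ∀ᵐ ω ∂μ, ‖θ k ω - x‖ ≤ R) :
    ∫ ω, ⟪θ k ω - x, u k ω⟫_ℝ ∂μ ≤ R * √(σ + G ^ 2) := by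
  have hg2 j : MemLp (g j) 2 μ := .of_bound (hg j).aestronglyMeasurable B (hgB j)
  have hu2 j : MemLp (u j) 2 μ :=
    .of_bound (aestronglyMeasurable_of_movingAverage hu0 hu
      (fun j => (hg j).aestronglyMeasurable) j) B (ae_norm_le_of_movingAverage hB hβ hu0 hu hgB j)
  have hgS j : ∫ ω, ‖g j ω‖ ^ 2 ∂μ ≤ σ + G ^ 2 :=
    integral_norm_sq_le_of_condExp_ae_eq (hθ j).comap_le
      ((measurable_gradient f).comp (comap_measurable (θ j))).stronglyMeasurable
      (.of_bound ((measurable_gradient f).comp (hθ j)).aestronglyMeasurable G (hgradG j))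
      (hg2 j) (hunbiased j) (hvar j) (hgradG j)
  have huS := integral_norm_sq_le_of_movingAverage (add_nonneg hσ (sq_nonneg G)) hβ hu0 hu hg2 hu2
    hgS k
  calc ∫ ω, ⟪θ k ω - x, u k ω⟫_ℝ ∂μ ≤ R * √(∫ ω, ‖u k ω‖ ^ 2 ∂μ) :=
        integral_inner_le_mul_sqrt_integral_norm_sq hR
          ((hθ k).sub measurable_const).aestronglyMeasurable hθx (hu2 k)
    _ ≤ R * √(σ + G ^ 2) := by gcongr

-- For `x < 0`, Mathlib's `x ^ y` is `exp (log x * y) * cos (y * π)`, not `0`.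
theorem Real.rpow_nonneg_of_abs_le_half (x : ℝ) {y : ℝ} (hy : |y| ≤ 1 / 2) : 0 ≤ x ^ y := by
  rcases lt_or_ge x 0 with hx | hx
  · rw [Real.rpow_def_of_neg hx]
    refine mul_nonneg (Real.exp_pos _).le (Real.cos_nonneg_of_mem_Icc ?_)
    obtain ⟨h1, h2⟩ := abs_le.1 hy
    constructor <;> nlinarith [Real.pi_pos]
  · exact Real.rpow_nonneg hx y

theorem Real.one_le_rpow_div_rpow_mul {v M β p : ℝ} (hv : 0 < v) (hvM : v ≤ M) (hβ : 0 < β)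
    (hβ1 : β ≤ 1) (hp : 0 ≤ p) : 1 ≤ M ^ p / (v ^ p * β) := by
  have hvp := Real.rpow_pos_of_pos hv p
  rw [one_le_div (by positivity)]
  calc v ^ p * β ≤ v ^ p := mul_le_of_le_one_right hvp.le hβ1
    _ ≤ M ^ p := Real.rpow_le_rpow hv.le hvM hp

theorem adam_lemmaA3_general
    {Ω : Type*} [MeasurableSpace Ω] (μ : Measure Ω) [IsProbabilityMeasure μ]
    {d : ℕ} (f : EuclideanSpace ℝ (Fin d) → ℝ)
    (θ m mp v g : ℕ → Ω → EuclideanSpace ℝ (Fin d))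
    (α β1 β2 : ℕ → ℝ)
    (σ2 b G B M vstar : ℝ)
    (D : EuclideanSpace ℝ (Fin d) → ℝ)
    (hb : 0 < b) (hσ2 : 0 ≤ σ2) (hG : 0 < G) (hB : 0 < B)
    (hαpos : ∀ k, 0 < α k)
    (hmp0 : ∀ ω, mp 0 ω = 0)
    (hmrec : ∀ k ω, m k ω = β1 k • mp k ω + (1 - β1 k) • g k ω)
    (hmpshift : ∀ k ω, mp (k+1) ω = m k ω)
    (hv0 : ∀ ω (i : Fin d), v 0 ω i = (1 - β2 0) * (g 0 ω i) ^ 2)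
    (hθmeas : ∀ k, Measurable (θ k)) (hgmeas : ∀ k, Measurable (g k))
    (hunbiased : ∀ k, μ[g k | MeasurableSpace.comap (θ k) inferInstance]
        =ᵐ[μ] fun ω => gradient f (θ k ω))
    (hvar : ∀ k, ∫ ω, ‖g k ω - gradient f (θ k ω)‖ ^ 2 ∂μ ≤ σ2 / b)
    (hGbd : ∀ k, ∀ᵐ ω ∂μ, ‖gradient f (θ k ω)‖ ≤ G)
    (hBbd : ∀ k, ∀ᵐ ω ∂μ, ‖g k ω‖ ≤ B)
    (hDpos : ∀ x, 0 < D x)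
    (hDbd : ∀ x k, ∀ᵐ ω ∂μ, ‖θ k ω - x‖ ≤ D x)
    (hM : ∀ k, ∀ᵐ ω ∂μ, ∀ i, (g k ω i) ^ 2 ≤ M)
    (hvstar : 0 < vstar)
    (hvstarle : ∀ k, ∀ᵐ ω ∂μ, ∀ i, vstar ≤ v k ω i)
    (hβ1mem : ∀ k, β1 k ∈ Set.Ioo (0:ℝ) 1) (hβ2mem : ∀ k, β2 k ∈ Set.Ico (0:ℝ) 1)
    :
    ∀ (k : ℕ) (x : EuclideanSpace ℝ (Fin d)),
      ∫ ω, (inner ℝ (θ k ω - x) (mp k ω) : ℝ) ∂μ ≤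
        D x * M ^ ((1:ℝ)/4) / (vstar ^ ((1:ℝ)/4) * β1 k) * Real.sqrt (σ2 / b + G ^ 2)
        + α k * Real.sqrt (1 - (β2 k) ^ (k+1)) / (2 * Real.sqrt vstar * β1 k * (1 - (β1 k) ^ (k+1))) * (σ2 / b + G ^ 2)
        + D x * G * ((1 - β1 k) / β1 k) := by
  intro k x
  have hD := (hDpos x).le
  have hCS : ∫ ω, (inner ℝ (θ k ω - x) (mp k ω) : ℝ) ∂μ ≤ D x * √(σ2 / b + G ^ 2) :=
    integral_inner_momentum_le_mul_sqrt (div_nonneg hσ2 hb.le) hB.le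
      (fun j => Set.Ioo_subset_Icc_self (hβ1mem j)) hmp0
      (fun j ω => by rw [hmpshift, hmrec]) hθmeas hgmeas hunbiased hvar hGbd hBbd hD (hDbd x k)
  obtain ⟨hβ1k, hβ1k'⟩ := hβ1mem k
  have hfirst : ∫ ω, (inner ℝ (θ k ω - x) (mp k ω) : ℝ) ∂μ
      ≤ D x * M ^ ((1:ℝ)/4) / (vstar ^ ((1:ℝ)/4) * β1 k) * √(σ2 / b + G ^ 2) := by
    rcases Nat.eq_zero_or_pos d with rfl | hd
    · -- the left side vanishes, while `M` is unconstrained and may be negative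
      have hθx ω : θ k ω - x = 0 := Subsingleton.elim _ _
      have := Real.rpow_nonneg_of_abs_le_half M (y := 1 / 4) (by norm_num [abs_of_pos])
      simp only [hθx, inner_zero_left, integral_zero]
      positivity
    · obtain ⟨ω, hgM, hvstarv⟩ := ((hM 0).and (hvstarle 0)).exists
      have hvM : vstar ≤ M := by
        nlinarith [hv0 ω ⟨0, hd⟩, hgM ⟨0, hd⟩, hvstarv ⟨0, hd⟩, (hβ2mem 0).1,
          sq_nonneg (g 0 ω ⟨0, hd⟩)]
      calc _ ≤ D x * √(σ2 / b + G ^ 2) := hCS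
        _ ≤ D x * √(σ2 / b + G ^ 2) * (M ^ ((1:ℝ)/4) / (vstar ^ ((1:ℝ)/4) * β1 k)) :=
          le_mul_of_one_le_right (by positivity)
            (Real.one_le_rpow_div_rpow_mul hvstar hvM hβ1k hβ1k'.le (by norm_num))
        _ = _ := by ring
  have hα := (hαpos k).le
  have hβ1pow : 0 ≤ 1 - β1 k ^ (k + 1) := sub_nonneg.2 (pow_le_one₀ hβ1k.le hβ1k'.le)
  have hβ1c : 0 ≤ 1 - β1 k := sub_nonneg.2 hβ1k'.le
  have hG0 := hG.le
  have hrest : 0 ≤ α k * √(1 - β2 k ^ (k + 1)) / (2 * √vstar * β1 k * (1 - β1 k ^ (k + 1)))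
      * (σ2 / b + G ^ 2) + D x * G * ((1 - β1 k) / β1 k) := by positivity
  linarith

theorem adam_lemmaA3
    {Ω : Type*} [MeasurableSpace Ω] (μ : Measure Ω) [IsProbabilityMeasure μ]
    {d : ℕ} (f : EuclideanSpace ℝ (Fin d) → ℝ)
    (θ m mp v g dvec : ℕ → Ω → EuclideanSpace ℝ (Fin d))
    (vhat : ℕ → Ω → Fin d → ℝ)
    (α β1 β2 : ℕ → ℝ)
    (σ2 b G B M vstar : ℝ)
    (D : EuclideanSpace ℝ (Fin d) → ℝ)
    (hf : ContDiff ℝ 1 f)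
    (hb : 0 < b) (hσ2 : 0 ≤ σ2) (hG : 0 < G) (hB : 0 < B)
    (hαpos : ∀ k, 0 < α k)
    (hmp0 : ∀ ω, mp 0 ω = 0)
    (hmrec : ∀ k ω, m k ω = β1 k • mp k ω + (1 - β1 k) • g k ω)
    (hmpshift : ∀ k ω, mp (k+1) ω = m k ω)
    (hv0 : ∀ ω (i : Fin d), v 0 ω i = (1 - β2 0) * (g 0 ω i) ^ 2)
    (hvrec : ∀ k ω (i : Fin d), v (k+1) ω i = β2 (k+1) * v k ω i + (1 - β2 (k+1)) * (g (k+1) ω i) ^ 2)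
    (hvhat : ∀ k ω (i : Fin d), vhat k ω i = v k ω i / (1 - (β2 k) ^ (k+1)))
    (hdvec : ∀ k ω (i : Fin d), dvec k ω i = -(m k ω i / (1 - (β1 k) ^ (k+1))) / Real.sqrt (vhat k ω i))
    (hθrec : ∀ k ω, θ (k+1) ω = θ k ω + α k • dvec k ω)
    (hθmeas : ∀ k, Measurable (θ k)) (hgmeas : ∀ k, Measurable (g k))
    (hunbiased : ∀ k, μ[g k | MeasurableSpace.comap (θ k) inferInstance]
        =ᵐ[μ] fun ω => gradient f (θ k ω))
    (hvar : ∀ k, ∫ ω, ‖g k ω - gradient f (θ k ω)‖ ^ 2 ∂μ ≤ σ2 / b)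
    (hGbd : ∀ k, ∀ᵐ ω ∂μ, ‖gradient f (θ k ω)‖ ≤ G)
    (hBbd : ∀ k, ∀ᵐ ω ∂μ, ‖g k ω‖ ≤ B)
    (hDpos : ∀ x, 0 < D x)
    (hDbd : ∀ x k, ∀ᵐ ω ∂μ, ‖θ k ω - x‖ ≤ D x)
    (hM : ∀ k, ∀ᵐ ω ∂μ, ∀ i, (g k ω i) ^ 2 ≤ M)
    (hvstar : 0 < vstar)
    (hvstarle : ∀ k, ∀ᵐ ω ∂μ, ∀ i, vstar ≤ v k ω i)
    (hβ1mem : ∀ k, β1 k ∈ Set.Ioo (0:ℝ) 1) (hβ2mem : ∀ k, β2 k ∈ Set.Ico (0:ℝ) 1)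
    :
    ∀ (k : ℕ) (x : EuclideanSpace ℝ (Fin d)),
      ∫ ω, (inner ℝ (θ k ω - x) (mp k ω) : ℝ) ∂μ ≤
        D x * M ^ ((1:ℝ)/4) / (vstar ^ ((1:ℝ)/4) * β1 k) * Real.sqrt (σ2 / b + G ^ 2)
        + α k * Real.sqrt (1 - (β2 k) ^ (k+1)) / (2 * Real.sqrt vstar * β1 k * (1 - (β1 k) ^ (k+1))) * (σ2 / b + G ^ 2)
        + D x * G * ((1 - β1 k) / β1 k) :=
  adam_lemmaA3_general μ f θ m mp v g α β1 β2 σ2 b G B M vstar D hb hσ2 hG hB hαpos hmp0 hmrec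
    hmpshift hv0 hθmeas hgmeas hunbiased hvar hGbd hBbd hDpos hDbd hM hvstar hvstarle hβ1mem hβ2mem
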